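/- Let d ≥ 0 be an integer and let (y_n)_{n>d} be complex numbers. Suppose there is a finite family indexed by m of triples (h_m, ζ_m, j_m) with h_m ∈ ℂ, ζ_m ∈ ℂ, |ζ_m| > 1, and j_m ≥ 1 an integer, such that y_n = Σ_m binomial(n+j_m−1, j_m−1)·h_m·ζ_m^{−n−j_m} for all n > d. Then Σ_{n>d} |y_n| ≤ Σ_m |h_m|·(d+2)^{j_m−1}·(|ζ_m|−1)^{−j_m}·|ζ_m|^{−d−1}; in particular the series Σ_{n>d} y_n·T_n(x) converges absolutely and uniformly for x ∈ [−1,1] and satisfies sup_{x∈[−1,1]} |Σ_{n>d} y_n·T_n(x)| ≤ Σ_m |h_m|·(d+2)^{j_m−1}·(|ζ_m|−1)^{−j_m}·|ζ_m|^{−d−1}. -/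

import Mathlib

/-!
With `r = 1/|ζ|`, the pole term of order `j` contributes `C(n+j-1, j-1) |h| r^(n+j)` to `|y_n|`.
For `n = d + 1 + k` the shift costs at most a factor `(d+2)^(j-1)`, since
`C(k+d+1+i, i) ≤ (d+2)^i C(k+i, i)`, and the negative binomial series
`Σ_k C(k+j-1, j-1) r^k = (1-r)^(-j)` then sums the majorant to the stated bound.
Since `|T_n| ≤ 1` on `[-1, 1]`, the Weierstrass M-test with weights `|y_n|` gives the rest.
-/

open Polynomial Filter

theorem Nat.choose_add_le_pow_mul_choose (n c k : ℕ) :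
    (n + c + k).choose k ≤ (c + 1) ^ k * (n + k).choose k := by
  induction k with
  | zero => simp
  | succ k ih =>
    refine Nat.le_of_mul_le_mul_right ?_ k.succ_pos
    calc (n + c + (k + 1)).choose (k + 1) * (k + 1)
        = (n + c + k + 1) * (n + c + k).choose k := (Nat.add_one_mul_choose_eq _ _).symm
      _ ≤ ((c + 1) * (n + k + 1)) * ((c + 1) ^ k * (n + k).choose k) :=
          Nat.mul_le_mul (by nlinarith) ih
      _ = (c + 1) ^ (k + 1) * (n + (k + 1)).choose (k + 1) * (k + 1) := by
          rw [mul_assoc ((c + 1) ^ (k + 1)), ← Nat.add_assoc, ← Nat.add_one_mul_choose_eq]; ring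

lemma hasSum_choose_mul_inv_pow {ρ : ℝ} (hρ : 1 < ρ) (d k : ℕ) :
    HasSum (fun n : ℕ => ((n + k).choose k : ℝ) * ρ⁻¹ ^ (n + d + 1 + (k + 1)))
      (((ρ - 1) ^ (k + 1))⁻¹ * ρ ^ (-(d : ℤ) - 1)) := by
  have hr : ‖ρ⁻¹‖ < 1 := by
    rw [norm_inv, Real.norm_of_nonneg (by linarith)]
    exact inv_lt_one_of_one_lt₀ hρ
  have hval : 1 / (1 - ρ⁻¹) ^ (k + 1) * ρ⁻¹ ^ (d + 1 + (k + 1)) =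
      ((ρ - 1) ^ (k + 1))⁻¹ * ρ ^ (-(d : ℤ) - 1) := by
    have hρ0 : ρ ≠ 0 := by positivity
    have hρ1 : ρ - 1 ≠ 0 := sub_ne_zero.mpr hρ.ne'
    rw [show -(d : ℤ) - 1 = -((d + 1 : ℕ) : ℤ) by push_cast; ring, zpow_neg, zpow_natCast,
      show 1 - ρ⁻¹ = (ρ - 1) / ρ by field_simp, inv_pow, div_pow, pow_add]
    field_simp
    ring
  have hterm : (fun n : ℕ => ((n + k).choose k : ℝ) * ρ⁻¹ ^ (n + d + 1 + (k + 1))) =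
      fun n => (n + k).choose k * ρ⁻¹ ^ n * ρ⁻¹ ^ (d + 1 + (k + 1)) := by
    ext n; ring
  rw [hterm, ← hval]
  exact (hasSum_choose_mul_geometric_of_norm_lt_one k hr).mul_right _

lemma norm_choose_mul_zpow_le (h ζ : ℂ) (n d k : ℕ) :
    ‖((n + d + 1 + k).choose k : ℂ) * h * ζ ^ (-((n + d + 1 : ℕ) : ℤ) - ((k + 1 : ℕ) : ℤ))‖ ≤
      ‖h‖ * (d + 2) ^ k * (((n + k).choose k : ℝ) * ‖ζ‖⁻¹ ^ (n + d + 1 + (k + 1))) := by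
  have hzpow : ‖ζ‖ ^ (-((n + d + 1 : ℕ) : ℤ) - ((k + 1 : ℕ) : ℤ)) =
      ‖ζ‖⁻¹ ^ (n + d + 1 + (k + 1)) := by
    rw [show -((n + d + 1 : ℕ) : ℤ) - ((k + 1 : ℕ) : ℤ) = -((n + d + 1 + (k + 1) : ℕ) : ℤ) by
      push_cast; ring, zpow_neg, zpow_natCast, inv_pow]
  have hchoose : ((n + d + 1 + k).choose k : ℝ) ≤ (d + 2) ^ k * (n + k).choose k := by
    exact_mod_cast Nat.choose_add_le_pow_mul_choose n (d + 1) k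
  rw [norm_mul, norm_mul, norm_zpow, hzpow, Complex.norm_natCast]
  calc ((n + d + 1 + k).choose k : ℝ) * ‖h‖ * ‖ζ‖⁻¹ ^ (n + d + 1 + (k + 1))
      ≤ (d + 2) ^ k * (n + k).choose k * ‖h‖ * ‖ζ‖⁻¹ ^ (n + d + 1 + (k + 1)) := by gcongr
    _ = _ := by ring

noncomputable def tailBound {ι : Type*} [Fintype ι]
    (h : ι → ℂ) (ζ : ι → ℂ) (jf : ι → ℕ) (d : ℕ) : ℝ :=
  ∑ m : ι, ‖h m‖ * (d + 2 : ℝ) ^ (jf m - 1) * ((‖ζ m‖ - 1) ^ jf m)⁻¹ *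
    ‖ζ m‖ ^ (-(d : ℤ) - 1)

theorem summable_norm_tail_and_tsum_le_tailBound {ι : Type*} [Fintype ι] (d : ℕ) (y : ℕ → ℂ)
    (h : ι → ℂ) (ζ : ι → ℂ) (jf : ι → ℕ)
    (hζ : ∀ m, 1 < ‖ζ m‖) (hj : ∀ m, 1 ≤ jf m)
    (hy : ∀ n : ℕ, d < n →
      y n = ∑ m : ι, (Nat.choose (n + jf m - 1) (jf m - 1) : ℂ) * h m *
        ζ m ^ (-(n : ℤ) - (jf m : ℤ))) :
    Summable (fun n : ℕ => ‖y (n + d + 1)‖) ∧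
      ∑' n : ℕ, ‖y (n + d + 1)‖ ≤ tailBound h ζ jf d := by
  have hj_succ : ∀ m, ∃ k, jf m = k + 1 := fun m => ⟨jf m - 1, (Nat.sub_add_cancel (hj m)).symm⟩
  set g : ι → ℕ → ℝ := fun m n => ‖h m‖ * (d + 2) ^ (jf m - 1) *
    (((n + (jf m - 1)).choose (jf m - 1) : ℝ) * ‖ζ m‖⁻¹ ^ (n + d + 1 + jf m))
  have hg : ∀ m, HasSum (g m) (‖h m‖ * (d + 2 : ℝ) ^ (jf m - 1) * ((‖ζ m‖ - 1) ^ jf m)⁻¹ *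
      ‖ζ m‖ ^ (-(d : ℤ) - 1)) := fun m => by
    obtain ⟨k, hk⟩ := hj_succ m
    simp only [g, hk, Nat.add_sub_cancel, mul_assoc]
    exact ((hasSum_choose_mul_inv_pow (hζ m) d k).mul_left _).mul_left _
  have hbound : ∀ n, ‖y (n + d + 1)‖ ≤ ∑ m, g m n := fun n => by
    rw [hy _ (by omega)]
    refine (norm_sum_le _ _).trans (Finset.sum_le_sum fun m _ => ?_)
    obtain ⟨k, hk⟩ := hj_succ m
    simp only [g, hk, Nat.add_sub_cancel, Nat.add_succ_sub_one]
    exact norm_choose_mul_zpow_le (h m) (ζ m) n d k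
  have hG : HasSum (fun n => ∑ m, g m n) (tailBound h ζ jf d) := hasSum_sum fun m _ => hg m
  have hs := hG.summable.of_nonneg_of_le (fun _ => norm_nonneg _) hbound
  exact ⟨hs, hasSum_le hbound hs.hasSum hG⟩

/-- if `y_n = Σ_m binom(n+j_m−1, j_m−1)·h_m·ζ_m^{−n−j_m}` for `n > d`,
with `|ζ_m| > 1` and `j_m ≥ 1`, then `Σ_{n>d} |y_n|` is bounded by `tailBound`,
the series `Σ_{n>d} y_n·T_n(x)` converges absolutely and uniformly on `[−1,1]`,
and its sup over `[−1,1]` is bounded by the same quantity. -/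
theorem stmt_6 {ι : Type*} [Fintype ι] (d : ℕ) (y : ℕ → ℂ)
    (h : ι → ℂ) (ζ : ι → ℂ) (jf : ι → ℕ)
    (hζ : ∀ m, 1 < ‖ζ m‖) (hj : ∀ m, 1 ≤ jf m)
    (hy : ∀ n : ℕ, d < n →
      y n = ∑ m : ι, (Nat.choose (n + jf m - 1) (jf m - 1) : ℂ) * h m *
        ζ m ^ (-(n : ℤ) - (jf m : ℤ))) :
    Summable (fun n : ℕ => ‖y (n + d + 1)‖) ∧
    (∑' n : ℕ, ‖y (n + d + 1)‖) ≤ tailBound h ζ jf d ∧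
    (∀ x ∈ Set.Icc (-1 : ℝ) 1,
      Summable (fun n : ℕ =>
        ‖y (n + d + 1) *
          (Complex.ofReal ((Polynomial.Chebyshev.T ℝ ((n : ℤ) + d + 1)).eval x))‖)) ∧
    TendstoUniformlyOn
      (fun (N : ℕ) (x : ℝ) => ∑ n ∈ Finset.range N,
        y (n + d + 1) * (Complex.ofReal ((Polynomial.Chebyshev.T ℝ ((n : ℤ) + d + 1)).eval x)))
      (fun x : ℝ => ∑' n : ℕ,
        y (n + d + 1) * (Complex.ofReal ((Polynomial.Chebyshev.T ℝ ((n : ℤ) + d + 1)).eval x)))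
      atTop (Set.Icc (-1 : ℝ) 1) ∧
    ∀ x ∈ Set.Icc (-1 : ℝ) 1,
      ‖∑' n : ℕ, y (n + d + 1) *
          (Complex.ofReal ((Polynomial.Chebyshev.T ℝ ((n : ℤ) + d + 1)).eval x))‖ ≤
        tailBound h ζ jf d := by
  obtain ⟨hsum, hle⟩ := summable_norm_tail_and_tsum_le_tailBound d y h ζ jf hζ hj hy
  have hterm : ∀ (n : ℕ) (x : ℝ), x ∈ Set.Icc (-1 : ℝ) 1 →
      ‖y (n + d + 1) * (Complex.ofReal ((Chebyshev.T ℝ ((n : ℤ) + d + 1)).eval x))‖ ≤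
        ‖y (n + d + 1)‖ := fun n x hx => by
    rw [norm_mul, Complex.norm_real, Real.norm_eq_abs]
    exact mul_le_of_le_one_right (norm_nonneg _)
      (Chebyshev.abs_eval_T_real_le_one _ (abs_le.2 hx))
  have hterm_sum : ∀ x ∈ Set.Icc (-1 : ℝ) 1, Summable fun n : ℕ =>
      ‖y (n + d + 1) * (Complex.ofReal ((Chebyshev.T ℝ ((n : ℤ) + d + 1)).eval x))‖ :=
    fun x hx => hsum.of_nonneg_of_le (fun _ => norm_nonneg _) (hterm · x hx)
  refine ⟨hsum, hle, hterm_sum, tendstoUniformlyOn_tsum_nat hsum hterm, fun x hx => ?_⟩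
  calc _ ≤ _ := norm_tsum_le_tsum_norm (hterm_sum x hx)
    _ ≤ ∑' n : ℕ, ‖y (n + d + 1)‖ := (hterm_sum x hx).tsum_le_tsum (hterm · x hx) hsum
    _ ≤ tailBound h ζ jf d := hle
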